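/- arXiv:1609.01621 — 4 statements merged into one kernel-verified Lean document; each statement's English description precedes it below -/
import Mathlib

section
/- Let u : [a,b] → [0,∞) and ρ : [0,∞) → [0,∞) be continuous functions such that ρ is strictly increasing with ρ(0) = 0 and ∫₀^ε dx/ρ(x) = ∞ for every ε > 0. If u(t) ≤ ∫ₐ^t ρ(u(s)) ds for all t ∈ [a,b], then u(t) = 0 for all t ∈ [a,b]. -/
open MeasureTheory Set intervalIntegral

/-!
Put `v t = ∫ₐᵗ ρ(u s) ds`. Then `u ≤ v`, so `v' = ρ ∘ u ≤ ρ ∘ v` because `ρ` is increasing, and `v`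
is nondecreasing with `v a = 0`. If `v t = ε > 0`, then for every `δ ∈ (0, ε)` there is a time
`c ∈ [a, t]` with `v c = δ`, and the substitution `x = v s` gives
`∫_δ^ε dx/ρ(x) = ∫_c^t v'(s)/ρ(v s) ds ≤ t - a`. Letting `δ → 0` contradicts the divergence of
`∫₀^ε dx/ρ(x)`, so `0 ≤ u t ≤ v t ≤ 0`.
-/

theorem setLIntegral_Ioc_le_of_forall_lt {μ : Measure ℝ} {f : ℝ → ENNReal} {a b : ℝ}
    {C : ENNReal} (h : ∀ δ, a < δ → δ < b → ∫⁻ x in Ioc δ b, f x ∂μ ≤ C) :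
    ∫⁻ x in Ioc a b, f x ∂μ ≤ C := by
  have hunion : Ioc a b = ⋃ n : ℕ, Ioc (a + 1 / (n + 1)) b := by
    ext x
    simp only [mem_Ioc, mem_iUnion]
    constructor
    · rintro ⟨hax, hxb⟩
      obtain ⟨n, hn⟩ := exists_nat_one_div_lt (sub_pos.2 hax)
      exact ⟨n, by linarith, hxb⟩
    · rintro ⟨n, hx, hxb⟩
      exact ⟨lt_trans (lt_add_of_pos_right a Nat.one_div_pos_of_nat) hx, hxb⟩
  have hmono : Monotone fun n : ℕ => Ioc (a + 1 / (n + 1)) b := fun m n hmn =>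
    Ioc_subset_Ioc_left (by gcongr)
  rw [hunion, setLIntegral_iUnion_of_directed _ hmono.directed_le]
  refine iSup_le fun n => ?_
  rcases lt_or_ge (a + 1 / (n + 1)) b with hlt | hge
  · exact h _ (lt_add_of_pos_right a Nat.one_div_pos_of_nat) hlt
  · rw [Ioc_eq_empty_of_le hge, Measure.restrict_empty, lintegral_zero_measure]
    exact zero_le

theorem integral_one_div_le_sub_of_hasDerivAt_le {v v' ρ : ℝ → ℝ} {c d : ℝ} (hcd : c ≤ d)
    (hv : ∀ t ∈ Icc c d, HasDerivAt v (v' t) t) (hv' : ContinuousOn v' (Icc c d))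
    (hρ : ContinuousOn ρ (v '' Icc c d)) (hρ_pos : ∀ t ∈ Icc c d, 0 < ρ (v t))
    (hv'_le : ∀ t ∈ Icc c d, v' t ≤ ρ (v t)) :
    ∫ x in v c..v d, 1 / ρ x ≤ d - c := by
  have hinv : ContinuousOn (fun x => 1 / ρ x) (v '' Icc c d) :=
    continuousOn_const.div hρ (by rintro _ ⟨t, ht, rfl⟩; exact (hρ_pos t ht).ne')
  have hv_cont : ContinuousOn v (Icc c d) := fun t ht =>
    (hv t ht).continuousAt.continuousWithinAt
  rw [← uIcc_of_le hcd] at hv hv' hinv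
  rw [← integral_comp_mul_deriv' hv hv' hinv]
  calc ∫ t in c..d, ((fun x => 1 / ρ x) ∘ v) t * v' t ≤ ∫ _ in c..d, (1 : ℝ) := by
        refine integral_mono_on hcd ?_ intervalIntegrable_const fun t ht => ?_
        · refine ContinuousOn.intervalIntegrable (ContinuousOn.mul ?_ hv')
          rw [uIcc_of_le hcd] at hinv ⊢
          exact hinv.comp hv_cont (mapsTo_image v _)
        · rw [Function.comp_apply, one_div_mul_eq_div, div_le_one (hρ_pos t ht)]
          exact hv'_le t ht
    _ = d - c := by simp

theorem le_zero_of_hasDerivAt_le_of_lintegral_inv_eq_top {v v' ρ : ℝ → ℝ} {a b : ℝ}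
    (hab : a ≤ b) (hv : ∀ t ∈ Icc a b, HasDerivAt v (v' t) t) (hv' : ContinuousOn v' (Icc a b))
    (hv'_nonneg : ∀ t ∈ Icc a b, 0 ≤ v' t) (hv'_le : ∀ t ∈ Icc a b, v' t ≤ ρ (v t))
    (hva : v a = 0) (hρ : ContinuousOn ρ (Ioi 0)) (hρ_pos : ∀ x > 0, 0 < ρ x)
    (hρ_div : ∀ ε > (0 : ℝ), ∫⁻ x in Ioc (0 : ℝ) ε, ENNReal.ofReal (1 / ρ x) = ⊤) :
    v b ≤ 0 := by
  by_contra! hvb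
  have hv_cont : ContinuousOn v (Icc a b) := fun t ht =>
    (hv t ht).continuousAt.continuousWithinAt
  have hv_mono : MonotoneOn v (Icc a b) :=
    monotoneOn_of_hasDerivWithinAt_nonneg (convex_Icc a b) hv_cont
      (fun t ht => (hv t (interior_subset ht)).hasDerivWithinAt)
      (fun t ht => hv'_nonneg t (interior_subset ht))
  suffices ∫⁻ x in Ioc (0 : ℝ) (v b), ENNReal.ofReal (1 / ρ x) ≤ ENNReal.ofReal (b - a) by
    exact (this.trans_lt ENNReal.ofReal_lt_top).ne (hρ_div _ hvb)
  refine setLIntegral_Ioc_le_of_forall_lt fun δ hδ hδb => ?_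
  obtain ⟨c, hc, hvc⟩ := intermediate_value_Icc hab hv_cont ⟨hva ▸ hδ.le, hδb.le⟩
  have hsub : Icc c b ⊆ Icc a b := Icc_subset_Icc_left hc.1
  have hδ_le : ∀ t ∈ Icc c b, δ ≤ v t := fun t ht =>
    hvc ▸ hv_mono ⟨hc.1, hc.2⟩ (hsub ht) ht.1
  have hinv : ContinuousOn (fun x => 1 / ρ x) (Icc δ (v b)) :=
    continuousOn_const.div (hρ.mono fun x hx => hδ.trans_le hx.1)
      fun x hx => (hρ_pos x (hδ.trans_le hx.1)).ne'
  rw [← ofReal_integral_eq_lintegral_ofReal (hinv.integrableOn_Icc.mono_set Ioc_subset_Icc_self)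
    ((ae_restrict_iff' measurableSet_Ioc).2 (ae_of_all _ fun x hx =>
      (one_div_pos.2 (hρ_pos x (hδ.trans hx.1))).le)), ← integral_of_le hδb.le]
  refine ENNReal.ofReal_le_ofReal ?_
  calc ∫ x in δ..v b, 1 / ρ x = ∫ x in v c..v b, 1 / ρ x := by rw [hvc]
    _ ≤ b - c := integral_one_div_le_sub_of_hasDerivAt_le hc.2 (fun t ht => hv t (hsub ht))
        (hv'.mono hsub) (hρ.mono (by rintro _ ⟨t, ht, rfl⟩; exact hδ.trans_le (hδ_le t ht)))
        (fun t ht => hρ_pos _ (hδ.trans_le (hδ_le t ht))) (fun t ht => hv'_le t (hsub ht))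
    _ ≤ b - a := by linarith [hc.1]

theorem bihari_lemma_general (a b : ℝ) (u ρ : ℝ → ℝ)
    (hu_cont : ContinuousOn u (Icc a b))
    (hu_nonneg : ∀ t ∈ Icc a b, 0 ≤ u t)
    (hρ_cont : ContinuousOn ρ (Ici 0))
    (hρ_mono : StrictMonoOn ρ (Ici 0))
    (hρ0 : ρ 0 = 0)
    (hρ_div : ∀ ε > (0:ℝ), ∫⁻ x in Ioc (0:ℝ) ε, ENNReal.ofReal (1 / ρ x) = ⊤)
    (hineq : ∀ t ∈ Icc a b, u t ≤ ∫ s in a..t, ρ (u s)) :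
    ∀ t ∈ Icc a b, u t = 0 := by
  intro t ht
  have hab : a ≤ b := ht.1.trans ht.2
  have hρ_pos : ∀ x > 0, 0 < ρ x := fun x hx => hρ0 ▸ hρ_mono self_mem_Ici hx.le hx
  have hρ_le : ∀ x y, 0 ≤ x → x ≤ y → ρ x ≤ ρ y := fun x y hx hxy =>
    hρ_mono.monotoneOn hx (hx.trans hxy) hxy
  -- `ρ ∘ u` extended continuously to `ℝ`, so that its primitive `v` is differentiable everywhere
  set g : ℝ → ℝ := fun s => ρ (u (projIcc a b hab s))
  have hg_cont : Continuous g := hρ_cont.comp_continuous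
    (hu_cont.comp_continuous (continuous_subtype_val.comp continuous_projIcc)
      fun s => (projIcc a b hab s).2) fun s => hu_nonneg _ (projIcc a b hab s).2
  have hg_eq : ∀ s ∈ Icc a b, g s = ρ (u s) := fun s hs => by simp [g, projIcc_of_mem hab hs]
  set v : ℝ → ℝ := fun s => ∫ r in a..s, g r
  have hu_le_v : ∀ s ∈ Icc a b, u s ≤ v s := fun s hs => (hineq s hs).trans_eq <|
    integral_congr fun r hr => (hg_eq r (uIcc_subset_Icc ⟨le_rfl, hab⟩ hs hr)).symm
  have hg_le : ∀ s ∈ Icc a t, g s ≤ ρ (v s) := fun s hs => by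
    have hs' : s ∈ Icc a b := ⟨hs.1, hs.2.trans ht.2⟩
    rw [hg_eq s hs']
    exact hρ_le _ _ (hu_nonneg s hs') (hu_le_v s hs')
  have hv_le : v t ≤ 0 :=
    le_zero_of_hasDerivAt_le_of_lintegral_inv_eq_top ht.1
      (fun s _ => (hg_cont.integral_hasStrictDerivAt a s).hasDerivAt) hg_cont.continuousOn
      (fun s _ => hρ0 ▸ hρ_le 0 _ le_rfl (hu_nonneg _ (projIcc a b hab s).2)) hg_le
      integral_same (hρ_cont.mono Ioi_subset_Ici_self) hρ_pos hρ_div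
  linarith [hu_nonneg t ht, hu_le_v t ht]

/-- Bihari's lemma. -/
theorem bihari_lemma (a b : ℝ) (hab : a < b) (u ρ : ℝ → ℝ)
    (hu_cont : ContinuousOn u (Icc a b))
    (hu_nonneg : ∀ t ∈ Icc a b, 0 ≤ u t)
    (hρ_cont : ContinuousOn ρ (Ici 0))
    (hρ_nonneg : ∀ x ∈ Ici (0:ℝ), 0 ≤ ρ x)
    (hρ_mono : StrictMonoOn ρ (Ici 0))
    (hρ0 : ρ 0 = 0)
    (hρ_div : ∀ ε > (0:ℝ), ∫⁻ x in Ioc (0:ℝ) ε, ENNReal.ofReal (1 / ρ x) = ⊤)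
    (hineq : ∀ t ∈ Icc a b, u t ≤ ∫ s in a..t, ρ (u s)) :
    ∀ t ∈ Icc a b, u t = 0 :=
  bihari_lemma_general a b u ρ hu_cont hu_nonneg hρ_cont hρ_mono hρ0 hρ_div hineq
end

section
/- Let r > 0 and let A, B : [r,∞) → (0,∞) be continuous. Define u₀ ≡ 1 and recursively uₙ(x) = ∫ᵣ^x exp(−∫ᵣ^y B(z) dz) ∫ᵣ^y uₙ₋₁(v) · (2 exp(∫ᵣ^v B(z) dz)/A(v)) dv dy for x ≥ r. Then for all n ≥ 0 and x ≥ r one has uₙ(x) ≤ u₁(x)ⁿ/n!. -/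
/-!
Writing `U = u₁`, the recursion reads `uₙ₊₁(x) = ∫ᵣˣ g(y) ∫ᵣʸ uₙ(v) w(v) dv dy` with `g, w ≥ 0`
and `U' = g · ∫ᵣ w`, so `U` is nondecreasing on `[r, ∞)`. If `uₙ ≤ Uⁿ/n!` there, pulling the
largest value `U(y)ⁿ/n!` out of the inner integral bounds `uₙ₊₁(x)` by
`∫ᵣˣ Uⁿ/n! · U' = Uⁿ⁺¹/(n+1)!`, because `U(r) = 0`.
-/

open MeasureTheory Set intervalIntegral

theorem integral_pow_div_factorial_mul_deriv {U U' : ℝ → ℝ} (hU : ∀ y, HasDerivAt U (U' y) y)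
    (hU' : Continuous U') (n : ℕ) (a b : ℝ) :
    ∫ y in a..b, U y ^ n / n.factorial * U' y =
      (U b ^ (n + 1) - U a ^ (n + 1)) / (n + 1).factorial := by
  have h := integral_comp_mul_deriv (a := a) (b := b) (fun y _ => hU y) hU'.continuousOn
    ((continuous_pow n).div_const (n.factorial : ℝ))
  simp only [Function.comp_def] at h
  rw [h, intervalIntegral.integral_div, integral_pow, Nat.factorial_succ]
  push_cast
  field_simp

theorem ContinuousOn.continuous_comp_max {f : ℝ → ℝ} {r : ℝ} (hf : ContinuousOn f (Ici r)) :
    Continuous fun x => f (max r x) :=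
  hf.comp_continuous (continuous_const.max continuous_id) (le_max_left r)

theorem monotoneOn_integral_Ici {f : ℝ → ℝ} {r : ℝ} (hf : Continuous f)
    (hf₀ : ∀ y ∈ Ici r, 0 ≤ f y) : MonotoneOn (fun x => ∫ y in r..x, f y) (Ici r) :=
  fun _ ha _ _ hab => integral_mono_interval le_rfl ha hab
    ((ae_restrict_mem measurableSet_Ioc).mono fun y hy => hf₀ y (le_of_lt hy.1))
    (hf.intervalIntegrable _ _)

noncomputable def volterraOp (r : ℝ) (g w f : ℝ → ℝ) (x : ℝ) : ℝ :=
  ∫ y in r..x, g y * ∫ v in r..y, f v * w v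

namespace volterraOp

variable {r : ℝ} {g w : ℝ → ℝ}

theorem continuous_integrand (hg : Continuous g) (hw : Continuous w) :
    Continuous fun y => g y * ∫ v in r..y, w v :=
  hg.mul (continuous_primitive (fun _ _ => hw.intervalIntegrable _ _) r)

theorem continuous (hg : Continuous g) (hw : Continuous w) {f : ℝ → ℝ} (hf : Continuous f) :
    Continuous (volterraOp r g w f) :=
  continuous_primitive (fun _ _ => (continuous_integrand hg (hf.mul hw)).intervalIntegrable _ _) r

theorem congr {g' w' f f' : ℝ → ℝ} (hg : EqOn g g' (Ici r)) (hw : EqOn w w' (Ici r))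
    (hf : EqOn f f' (Ici r)) {x : ℝ} (hx : r ≤ x) :
    volterraOp r g w f x = volterraOp r g' w' f' x := by
  refine integral_congr fun y hy => ?_
  rw [uIcc_of_le hx] at hy
  rw [hg hy.1, integral_congr fun v hv => ?_]
  rw [uIcc_of_le hy.1] at hv
  rw [hw hv.1, hf hv.1]

theorem eqOn_iterate {g' w' : ℝ → ℝ} {u : ℕ → ℝ → ℝ} (hg : EqOn g' g (Ici r))
    (hw : EqOn w' w (Ici r)) (hu0 : ∀ x, u 0 x = 1)
    (hrec : ∀ n x, u (n + 1) x = volterraOp r g' w' (u n) x) (n : ℕ) :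
    EqOn (u n) ((volterraOp r g w)^[n] 1) (Ici r) := by
  induction n with
  | zero => exact fun x _ => hu0 x
  | succ n ih =>
    intro x hx
    rw [hrec, Function.iterate_succ_apply']
    exact congr hg hw ih hx

theorem mono (hg : Continuous g) (hw : Continuous w) (hg₀ : ∀ y ∈ Ici r, 0 ≤ g y)
    (hw₀ : ∀ v ∈ Ici r, 0 ≤ w v) {f f' : ℝ → ℝ} (hf : Continuous f) (hf' : Continuous f')
    (hle : ∀ v ∈ Ici r, f v ≤ f' v) {x : ℝ} (hx : r ≤ x) :
    volterraOp r g w f x ≤ volterraOp r g w f' x :=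
  integral_mono_on hx ((continuous_integrand hg (hf.mul hw)).intervalIntegrable _ _)
    ((continuous_integrand hg (hf'.mul hw)).intervalIntegrable _ _) fun y hy =>
    mul_le_mul_of_nonneg_left
      (integral_mono_on hy.1 ((hf.mul hw).intervalIntegrable _ _)
        ((hf'.mul hw).intervalIntegrable _ _) fun v hv =>
        mul_le_mul_of_nonneg_right (hle v hv.1) (hw₀ v hv.1))
      (hg₀ y hy.1)

theorem le_integral_of_monotoneOn (hg : Continuous g) (hw : Continuous w)
    (hg₀ : ∀ y ∈ Ici r, 0 ≤ g y) (hw₀ : ∀ v ∈ Ici r, 0 ≤ w v) {f : ℝ → ℝ} (hf : Continuous f)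
    (hmono : MonotoneOn f (Ici r)) {x : ℝ} (hx : r ≤ x) :
    volterraOp r g w f x ≤ ∫ y in r..x, f y * (g y * ∫ v in r..y, w v) := by
  refine integral_mono_on hx ((continuous_integrand hg (hf.mul hw)).intervalIntegrable _ _)
    ((hf.mul (continuous_integrand hg hw)).intervalIntegrable _ _) fun y hy => ?_
  have hinner : ∫ v in r..y, f v * w v ≤ f y * ∫ v in r..y, w v := by
    rw [← intervalIntegral.integral_const_mul]
    exact integral_mono_on hy.1 ((hf.mul hw).intervalIntegrable _ _)
      ((continuous_const.mul hw).intervalIntegrable _ _) fun v hv =>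
      mul_le_mul_of_nonneg_right (hmono hv.1 hy.1 hv.2) (hw₀ v hv.1)
  calc g y * ∫ v in r..y, f v * w v ≤ g y * (f y * ∫ v in r..y, w v) :=
        mul_le_mul_of_nonneg_left hinner (hg₀ y hy.1)
    _ = f y * (g y * ∫ v in r..y, w v) := mul_left_comm _ _ _

theorem pow_div_factorial_le (hg : Continuous g) (hw : Continuous w)
    (hg₀ : ∀ y ∈ Ici r, 0 ≤ g y) (hw₀ : ∀ v ∈ Ici r, 0 ≤ w v) (n : ℕ) {x : ℝ} (hx : r ≤ x) :
    volterraOp r g w (fun v => volterraOp r g w 1 v ^ n / n.factorial) x ≤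
      volterraOp r g w 1 x ^ (n + 1) / (n + 1).factorial := by
  have hU : volterraOp r g w 1 = fun x => ∫ y in r..x, g y * ∫ v in r..y, w v := by
    funext x; simp only [volterraOp, Pi.one_apply, one_mul]
  rw [hU]
  set U := fun x => ∫ y in r..x, g y * ∫ v in r..y, w v
  have hU' : ∀ y, HasDerivAt U (g y * ∫ v in r..y, w v) y := fun y =>
    ((continuous_integrand hg hw).integral_hasStrictDerivAt r y).hasDerivAt
  have hUmono : MonotoneOn U (Ici r) :=
    monotoneOn_integral_Ici (continuous_integrand hg hw) fun y hy =>
      mul_nonneg (hg₀ y hy) (integral_nonneg hy fun v hv => hw₀ v hv.1)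
  have hUc : Continuous U :=
    continuous_primitive (fun _ _ => (continuous_integrand hg hw).intervalIntegrable _ _) r
  have hUr : U r = 0 := integral_same
  have hU₀ : ∀ y ∈ Ici r, 0 ≤ U y := fun y hy => hUr ▸ hUmono self_mem_Ici hy hy
  calc volterraOp r g w (fun v => U v ^ n / n.factorial) x
      ≤ ∫ y in r..x, U y ^ n / n.factorial * (g y * ∫ v in r..y, w v) :=
        le_integral_of_monotoneOn hg hw hg₀ hw₀ ((hUc.pow n).div_const _)
          (fun a ha b hb hab => div_le_div_of_nonneg_right
            (pow_le_pow_left₀ (hU₀ a ha) (hUmono ha hb hab) n) (Nat.cast_nonneg _)) hx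
    _ = U x ^ (n + 1) / (n + 1).factorial := by
        rw [integral_pow_div_factorial_mul_deriv hU'
          (continuous_integrand hg hw) n r x, hUr]
        simp

theorem continuous_iterate (hg : Continuous g) (hw : Continuous w) (n : ℕ) :
    Continuous ((volterraOp r g w)^[n] 1) := by
  induction n with
  | zero => exact continuous_const
  | succ n ih => simpa only [Function.iterate_succ_apply'] using continuous hg hw ih

theorem iterate_one_le (hg : Continuous g) (hw : Continuous w)
    (hg₀ : ∀ y ∈ Ici r, 0 ≤ g y) (hw₀ : ∀ v ∈ Ici r, 0 ≤ w v) (n : ℕ) {x : ℝ} (hx : r ≤ x) :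
    (volterraOp r g w)^[n] 1 x ≤ volterraOp r g w 1 x ^ n / n.factorial := by
  induction n generalizing x with
  | zero => simp
  | succ n ih =>
    rw [Function.iterate_succ_apply']
    exact (mono hg hw hg₀ hw₀ (continuous_iterate hg hw n)
      (((continuous hg hw continuous_one).pow n).div_const _) (fun v hv => ih hv) hx).trans
      (pow_div_factorial_le hg hw hg₀ hw₀ n hx)

end volterraOp

theorem recursive_u_factorial_bound_general (r : ℝ) (A B : ℝ → ℝ)
    (hA_cont : ContinuousOn A (Ici r)) (hA_pos : ∀ x ∈ Ici r, 0 < A x)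
    (hB_cont : ContinuousOn B (Ici r))
    (u : ℕ → ℝ → ℝ)
    (hu0 : ∀ x, u 0 x = 1)
    (hurec : ∀ n : ℕ, ∀ x : ℝ,
      u (n + 1) x = ∫ y in r..x, Real.exp (-∫ z in r..y, B z) *
        ∫ v in r..y, u n v * (2 * Real.exp (∫ z in r..v, B z) / A v)) :
    ∀ n : ℕ, ∀ x ∈ Ici r, u n x ≤ (u 1 x) ^ n / (Nat.factorial n) := by
  -- Only the values of `A` and `B` on `[r, ∞)` enter; composing with `max r` makes them continuous.
  set P : ℝ → ℝ := fun y => ∫ z in r..y, B (max r z)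
  set g : ℝ → ℝ := fun y => Real.exp (-P y)
  set w : ℝ → ℝ := fun v => 2 * Real.exp (P v) / A (max r v)
  have hA_pos' : ∀ x, 0 < A (max r x) := fun x => hA_pos _ (le_max_left r x)
  have hP : Continuous P := continuous_primitive (fun _ _ =>
    hB_cont.continuous_comp_max.intervalIntegrable _ _) r
  have hg : Continuous g := by fun_prop
  have hw : Continuous w := (by fun_prop : Continuous fun v => 2 * Real.exp (P v)).div
    hA_cont.continuous_comp_max fun x => (hA_pos' x).ne'
  have hg₀ : ∀ y ∈ Ici r, 0 ≤ g y := fun y _ => (Real.exp_pos _).le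
  have hw₀ : ∀ v ∈ Ici r, 0 ≤ w v := fun v _ => div_nonneg (by positivity) (hA_pos' v).le
  have hPB : ∀ y ∈ Ici r, ∫ z in r..y, B z = P y := fun y hy =>
    integral_congr fun z hz => by rw [uIcc_of_le hy] at hz; rw [max_eq_right hz.1]
  have hu : ∀ n, EqOn (u n) ((volterraOp r g w)^[n] 1) (Ici r) :=
    volterraOp.eqOn_iterate (fun y hy => by simp only [g, hPB y hy])
      (fun v hv => by simp only [w, hPB v hv, max_eq_right (show r ≤ v from hv)]) hu0 hurec
  intro n x hx
  rw [hu n hx, hu 1 hx]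
  exact volterraOp.iterate_one_le hg hw hg₀ hw₀ n hx

/-- The recursively defined functions `uₙ` satisfy `uₙ(x) ≤ u₁(x)ⁿ / n!`. -/
theorem recursive_u_factorial_bound (r : ℝ) (hr : 0 < r) (A B : ℝ → ℝ)
    (hA_cont : ContinuousOn A (Ici r)) (hA_pos : ∀ x ∈ Ici r, 0 < A x)
    (hB_cont : ContinuousOn B (Ici r)) (hB_pos : ∀ x ∈ Ici r, 0 < B x)
    (u : ℕ → ℝ → ℝ)
    (hu0 : ∀ x, u 0 x = 1)
    (hurec : ∀ n : ℕ, ∀ x : ℝ,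
      u (n + 1) x = ∫ y in r..x, Real.exp (-∫ z in r..y, B z) *
        ∫ v in r..y, u n v * (2 * Real.exp (∫ z in r..v, B z) / A v)) :
    ∀ n : ℕ, ∀ x ∈ Ici r, u n x ≤ (u 1 x) ^ n / (Nat.factorial n) :=
  recursive_u_factorial_bound_general r A B hA_cont hA_pos hB_cont u hu0 hurec
end

section
/- Let r > 0 and A, B : [r,∞) → (0,∞) be continuous, and define uₙ as above with u₀ ≡ 1. Then the series u := Σₙ₌₀^∞ uₙ converges absolutely, locally uniformly on [r,∞), u is twice continuously differentiable, nondecreasing, and satisfies A(x) u''(x) + A(x) B(x) u'(x) = 2 u(x) for all x ≥ r. -/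
/-!
With `E = exp (-∫_r B)` and `g = 2 exp (∫_r B) / A` the recursion reads `uₙ₊₁ = K uₙ` for the
positive operator `K f (x) = ∫_r^x E(y) ∫_r^y f(v) g(v) dv dy`, so `uₙ = Kⁿ 1` and `∑ uₙ` is the
Neumann series of `U = 1 + K U`. Every `uₙ` is nonnegative and nondecreasing, hence
`uₙ₊₁' ≤ uₙ u₁'`, and comparing derivatives gives `uₙ ≤ u₁ⁿ / n!`. This bound gives locally uniform
convergence and dominates termwise integration, so `U = 1 + K U`; differentiating twice,
`E' = -B E` and `E g = 2 / A` turn this into `A U'' + A B U' = 2 U`.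
-/

open MeasureTheory Set intervalIntegral Filter Topology
open scoped Nat

section HalfLine

variable {r : ℝ}

theorem hasDerivWithinAt_integral_Ici {h : ℝ → ℝ} (hc : ContinuousOn h (Ici r)) {x : ℝ}
    (hx : x ∈ Ici r) : HasDerivWithinAt (fun t => ∫ s in r..t, h s) (h x) (Ici r) x := by
  have hint : IntervalIntegrable h volume r x :=
    (hc.mono Icc_subset_Ici_self).intervalIntegrable_of_Icc hx
  have hmeas : AEStronglyMeasurable h (volume.restrict (Ici r)) :=
    hc.aestronglyMeasurable measurableSet_Ici
  rcases eq_or_lt_of_le (mem_Ici.1 hx) with rfl | hrx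
  · exact integral_hasDerivWithinAt_right (t := Ioi r) hint
      ⟨Ici r, mem_of_superset self_mem_nhdsWithin Ioi_subset_Ici_self, hmeas⟩
      ((hc r hx).mono Ioi_subset_Ici_self)
  · exact (integral_hasDerivAt_right hint ⟨Ici r, Ici_mem_nhds hrx, hmeas⟩
      ((hc x hx).continuousAt (Ici_mem_nhds hrx))).hasDerivWithinAt

theorem continuousOn_integral_Ici {h : ℝ → ℝ} (hc : ContinuousOn h (Ici r)) :
    ContinuousOn (fun t => ∫ s in r..t, h s) (Ici r) :=
  fun _ hx => (hasDerivWithinAt_integral_Ici hc hx).continuousWithinAt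

theorem monotoneOn_Ici_of_hasDerivWithinAt_nonneg {f f' : ℝ → ℝ}
    (hf : ∀ x ∈ Ici r, HasDerivWithinAt f (f' x) (Ici r) x) (hf' : ∀ x ∈ Ici r, 0 ≤ f' x) :
    MonotoneOn f (Ici r) := by
  refine monotoneOn_of_hasDerivWithinAt_nonneg (f' := f') (convex_Ici r)
    (fun x hx => (hf x hx).continuousWithinAt) ?_ ?_ <;> rw [interior_Ici]
  · exact fun x hx => (hf x (mem_Ioi.1 hx).le).mono Ioi_subset_Ici_self
  · exact fun x hx => hf' x (mem_Ioi.1 hx).le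

theorem le_of_hasDerivWithinAt_le_Ici {f g f' g' : ℝ → ℝ}
    (hf : ∀ x ∈ Ici r, HasDerivWithinAt f (f' x) (Ici r) x)
    (hg : ∀ x ∈ Ici r, HasDerivWithinAt g (g' x) (Ici r) x)
    (hr : f r ≤ g r) (hle : ∀ x ∈ Ici r, f' x ≤ g' x) {x : ℝ} (hx : x ∈ Ici r) : f x ≤ g x := by
  have hmono := monotoneOn_Ici_of_hasDerivWithinAt_nonneg (fun y hy => (hg y hy).sub (hf y hy))
    fun y hy => sub_nonneg.2 (hle y hy)
  have := hmono self_mem_Ici hx hx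
  simp only [Pi.sub_apply] at this
  linarith

end HalfLine

theorem integral_mul_le_of_monotoneOn {a b : ℝ} (hab : a ≤ b) {f g : ℝ → ℝ}
    (hf : MonotoneOn f (Icc a b)) (hfc : ContinuousOn f (Icc a b))
    (hgc : ContinuousOn g (Icc a b)) (hg : ∀ x ∈ Icc a b, 0 ≤ g x) :
    ∫ x in a..b, f x * g x ≤ f b * ∫ x in a..b, g x := by
  rw [← intervalIntegral.integral_const_mul]
  refine integral_mono_on hab ((hfc.mul hgc).intervalIntegrable_of_Icc hab)
    ((continuousOn_const.mul hgc).intervalIntegrable_of_Icc hab) fun x hx => ?_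
  exact mul_le_mul_of_nonneg_right (hf hx (right_mem_Icc.2 hab) hx.2) (hg x hx)

theorem hasSum_intervalIntegral_of_abs_le_mul {a b : ℝ} (hab : a ≤ b) {F : ℕ → ℝ → ℝ}
    {c : ℕ → ℝ} {h : ℝ → ℝ} (hF : ∀ n, ContinuousOn (F n) (Icc a b))
    (hh : ContinuousOn h (Icc a b)) (hc : Summable c)
    (hle : ∀ n, ∀ t ∈ Icc a b, |F n t| ≤ c n * h t) :
    HasSum (fun n => ∫ t in a..b, F n t) (∫ t in a..b, ∑' n, F n t) := by
  have hIoc : uIoc a b ⊆ Icc a b := uIoc_of_le hab ▸ Ioc_subset_Icc_self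
  refine hasSum_integral_of_dominated_convergence (fun n t => c n * h t)
    (fun n => ((hF n).mono hIoc).aestronglyMeasurable measurableSet_uIoc)
    (fun n => ae_of_all _ fun t ht => hle n t (hIoc ht))
    (ae_of_all _ fun t _ => hc.mul_right (h t)) ?_
    (ae_of_all _ fun t ht =>
      (Summable.of_norm_bounded (hc.mul_right (h t)) (hle · t (hIoc ht))).hasSum)
  simp_rw [tsum_mul_right]
  exact (continuousOn_const.mul hh).intervalIntegrable_of_Icc hab

noncomputable def nestedIntegral (r : ℝ) (E g f : ℝ → ℝ) (x : ℝ) : ℝ :=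
  ∫ y in r..x, E y * ∫ v in r..y, f v * g v

section NestedIntegral

variable {r : ℝ} {E g f : ℝ → ℝ}

theorem hasDerivWithinAt_nestedIntegral (hE : ContinuousOn E (Ici r))
    (hg : ContinuousOn g (Ici r)) (hf : ContinuousOn f (Ici r)) {x : ℝ} (hx : x ∈ Ici r) :
    HasDerivWithinAt (nestedIntegral r E g f) (E x * ∫ v in r..x, f v * g v) (Ici r) x :=
  hasDerivWithinAt_integral_Ici (hE.mul (continuousOn_integral_Ici (hf.mul hg))) hx

theorem continuousOn_nestedIntegral (hE : ContinuousOn E (Ici r))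
    (hg : ContinuousOn g (Ici r)) (hf : ContinuousOn f (Ici r)) :
    ContinuousOn (nestedIntegral r E g f) (Ici r) :=
  fun _ hx => (hasDerivWithinAt_nestedIntegral hE hg hf hx).continuousWithinAt

theorem mul_integral_mul_nonneg (hE : ∀ x ∈ Ici r, 0 ≤ E x) (hg : ∀ x ∈ Ici r, 0 ≤ g x)
    (hf : ∀ x ∈ Ici r, 0 ≤ f x) {x : ℝ} (hx : x ∈ Ici r) :
    0 ≤ E x * ∫ v in r..x, f v * g v :=
  mul_nonneg (hE x hx) (integral_nonneg hx fun v hv => mul_nonneg (hf v hv.1) (hg v hv.1))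

end NestedIntegral

structure IsNeumannSeq (r : ℝ) (E g : ℝ → ℝ) (u : ℕ → ℝ → ℝ) : Prop where
  continuousOn_E : ContinuousOn E (Ici r)
  continuousOn_g : ContinuousOn g (Ici r)
  E_nonneg : ∀ x ∈ Ici r, 0 ≤ E x
  g_nonneg : ∀ x ∈ Ici r, 0 ≤ g x
  zero : ∀ x, u 0 x = 1
  succ : ∀ n, u (n + 1) = nestedIntegral r E g (u n)

namespace IsNeumannSeq

variable {r : ℝ} {E g : ℝ → ℝ} {u : ℕ → ℝ → ℝ}

theorem continuousOn (h : IsNeumannSeq r E g u) (n : ℕ) : ContinuousOn (u n) (Ici r) := by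
  induction n with
  | zero => simpa only [funext h.zero] using continuousOn_const
  | succ n ih =>
    rw [h.succ]
    exact continuousOn_nestedIntegral h.continuousOn_E h.continuousOn_g ih

theorem hasDerivWithinAt (h : IsNeumannSeq r E g u) (n : ℕ) {x : ℝ} (hx : x ∈ Ici r) :
    HasDerivWithinAt (u (n + 1)) (E x * ∫ v in r..x, u n v * g v) (Ici r) x := by
  rw [h.succ]
  exact hasDerivWithinAt_nestedIntegral h.continuousOn_E h.continuousOn_g (h.continuousOn n) hx

theorem succ_apply_left (h : IsNeumannSeq r E g u) (n : ℕ) : u (n + 1) r = 0 := by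
  rw [h.succ]
  exact integral_same

theorem nonneg (h : IsNeumannSeq r E g u) (n : ℕ) {x : ℝ} (hx : x ∈ Ici r) : 0 ≤ u n x := by
  induction n generalizing x with
  | zero => simp [h.zero]
  | succ n ih =>
    have hmono := monotoneOn_Ici_of_hasDerivWithinAt_nonneg (fun y hy => h.hasDerivWithinAt n hy)
      fun y hy => mul_integral_mul_nonneg h.E_nonneg h.g_nonneg (fun v hv => ih hv) hy
    simpa only [h.succ_apply_left] using hmono self_mem_Ici hx hx

theorem monotoneOn (h : IsNeumannSeq r E g u) (n : ℕ) : MonotoneOn (u n) (Ici r) := by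
  cases n with
  | zero => simpa only [funext h.zero] using monotoneOn_const
  | succ n =>
    exact monotoneOn_Ici_of_hasDerivWithinAt_nonneg (fun y hy => h.hasDerivWithinAt n hy)
      fun y hy => mul_integral_mul_nonneg h.E_nonneg h.g_nonneg (fun v hv => h.nonneg n hv) hy

theorem deriv_le (h : IsNeumannSeq r E g u) (n : ℕ) {x : ℝ} (hx : x ∈ Ici r) :
    E x * ∫ v in r..x, u n v * g v ≤ u n x * (E x * ∫ v in r..x, u 0 v * g v) := by
  have hIcc : Icc r x ⊆ Ici r := Icc_subset_Ici_self
  have := integral_mul_le_of_monotoneOn hx ((h.monotoneOn n).mono hIcc)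
    ((h.continuousOn n).mono hIcc) (h.continuousOn_g.mono hIcc) fun v hv => h.g_nonneg v hv.1
  simp only [h.zero, one_mul]
  calc E x * ∫ v in r..x, u n v * g v ≤ E x * (u n x * ∫ v in r..x, g v) :=
        mul_le_mul_of_nonneg_left this (h.E_nonneg x hx)
    _ = _ := mul_left_comm _ _ _

theorem le_pow_div_factorial (h : IsNeumannSeq r E g u) (n : ℕ) {x : ℝ} (hx : x ∈ Ici r) :
    u n x ≤ u 1 x ^ n / n ! := by
  induction n generalizing x with
  | zero => simp [h.zero]
  | succ n ih =>
    refine le_of_hasDerivWithinAt_le_Ici (fun y hy => h.hasDerivWithinAt n hy)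
      (fun y hy => ((h.hasDerivWithinAt 0 hy).pow (n + 1)).div_const ((n + 1)! : ℝ))
      (by simp [h.succ_apply_left]) (fun y hy => ?_) hx
    calc _ ≤ u n y * (E y * ∫ v in r..y, u 0 v * g v) := h.deriv_le n hy
      _ ≤ u 1 y ^ n / n ! * (E y * ∫ v in r..y, u 0 v * g v) :=
        mul_le_mul_of_nonneg_right (ih hy)
          (mul_integral_mul_nonneg h.E_nonneg h.g_nonneg (fun v hv => h.nonneg 0 hv) hy)
      _ = _ := by
        rw [Nat.factorial_succ]
        push_cast
        field_simp

theorem abs_le_pow_div_factorial (h : IsNeumannSeq r E g u) (n : ℕ) {v x : ℝ}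
    (hv : v ∈ Icc r x) : |u n v| ≤ u 1 x ^ n / n ! := by
  rw [abs_of_nonneg (h.nonneg n hv.1)]
  refine (h.le_pow_div_factorial n hv.1).trans ?_
  gcongr
  · exact h.nonneg 1 hv.1
  · exact h.monotoneOn 1 hv.1 (hv.1.trans hv.2) hv.2

theorem abs_deriv_le_pow_div_factorial (h : IsNeumannSeq r E g u) (n : ℕ) {y x : ℝ}
    (hy : y ∈ Icc r x) :
    |E y * ∫ v in r..y, u n v * g v| ≤ u 1 x ^ n / n ! * (E y * ∫ v in r..y, u 0 v * g v) := by
  have hu' (m : ℕ) :=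
    mul_integral_mul_nonneg h.E_nonneg h.g_nonneg (fun v hv => h.nonneg m hv) hy.1
  rw [abs_of_nonneg (hu' n)]
  exact (h.deriv_le n hy.1).trans <| mul_le_mul_of_nonneg_right
    ((le_abs_self _).trans (h.abs_le_pow_div_factorial n hy)) (hu' 0)

theorem summable_abs (h : IsNeumannSeq r E g u) {x : ℝ} (hx : x ∈ Ici r) :
    Summable fun n => |u n x| :=
  (Real.summable_pow_div_factorial (u 1 x)).of_nonneg_of_le (fun _ => abs_nonneg _)
    fun n => h.abs_le_pow_div_factorial n ⟨hx, le_rfl⟩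

theorem summable (h : IsNeumannSeq r E g u) {x : ℝ} (hx : x ∈ Ici r) :
    Summable fun n => u n x :=
  summable_abs_iff.1 (h.summable_abs hx)

theorem tendstoUniformlyOn_Icc (h : IsNeumannSeq r E g u) (b : ℝ) :
    TendstoUniformlyOn (fun N x => ∑ n ∈ Finset.range N, u n x) (fun x => ∑' n, u n x) atTop
      (Icc r b) :=
  tendstoUniformlyOn_tsum_nat (Real.summable_pow_div_factorial (u 1 b))
    fun n _ hx => h.abs_le_pow_div_factorial n hx

theorem tendstoLocallyUniformlyOn (h : IsNeumannSeq r E g u) :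
    TendstoLocallyUniformlyOn (fun N x => ∑ n ∈ Finset.range N, u n x) (fun x => ∑' n, u n x)
      atTop (Ici r) := by
  intro s hs x _
  refine ⟨Icc r (x + 1), ?_, h.tendstoUniformlyOn_Icc (x + 1) s hs⟩
  rw [← Ici_inter_Iic]
  exact inter_mem_nhdsWithin (Ici r) (Iic_mem_nhds (lt_add_one x))

theorem continuousOn_tsum (h : IsNeumannSeq r E g u) :
    ContinuousOn (fun x => ∑' n, u n x) (Ici r) :=
  h.tendstoLocallyUniformlyOn.continuousOn <|
    Frequently.of_forall fun _ => continuousOn_finsetSum _ fun n _ => h.continuousOn n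

theorem monotoneOn_tsum (h : IsNeumannSeq r E g u) :
    MonotoneOn (fun x => ∑' n, u n x) (Ici r) :=
  fun _ hx _ hy hxy => (h.summable hx).tsum_le_tsum (fun n => h.monotoneOn n hx hy hxy)
    (h.summable hy)

theorem hasSum_integral_mul (h : IsNeumannSeq r E g u) {x : ℝ} (hx : x ∈ Ici r) :
    HasSum (fun n => ∫ v in r..x, u n v * g v) (∫ v in r..x, (∑' n, u n v) * g v) := by
  have hIcc : Icc r x ⊆ Ici r := Icc_subset_Ici_self
  have hsum := hasSum_intervalIntegral_of_abs_le_mul hx (F := fun n v => u n v * g v)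
    (c := fun n => u 1 x ^ n / n !) (fun n => ((h.continuousOn n).mul h.continuousOn_g).mono hIcc)
    (h.continuousOn_g.mono hIcc) (Real.summable_pow_div_factorial _) fun n v hv => by
      rw [abs_mul, abs_of_nonneg (h.g_nonneg v hv.1)]
      exact mul_le_mul_of_nonneg_right (h.abs_le_pow_div_factorial n hv) (h.g_nonneg v hv.1)
  simpa only [tsum_mul_right] using hsum

theorem hasSum_succ (h : IsNeumannSeq r E g u) {x : ℝ} (hx : x ∈ Ici r) :
    HasSum (fun n => u (n + 1) x) (nestedIntegral r E g (fun v => ∑' n, u n v) x) := by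
  have hIcc : Icc r x ⊆ Ici r := Icc_subset_Ici_self
  have hderiv (m : ℕ) : ContinuousOn (fun y => E y * ∫ v in r..y, u m v * g v) (Icc r x) :=
    (h.continuousOn_E.mul
      (continuousOn_integral_Ici ((h.continuousOn m).mul h.continuousOn_g))).mono hIcc
  have hsum := hasSum_intervalIntegral_of_abs_le_mul hx (c := fun n => u 1 x ^ n / n !)
    hderiv (hderiv 0) (Real.summable_pow_div_factorial _)
    fun n y hy => h.abs_deriv_le_pow_div_factorial n hy
  simp only [h.succ, nestedIntegral]
  convert hsum using 1
  refine integral_congr fun y hy => ?_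
  rw [uIcc_of_le hx] at hy
  simp only [tsum_mul_left, (h.hasSum_integral_mul hy.1).tsum_eq]

theorem tsum_eq_one_add_nestedIntegral (h : IsNeumannSeq r E g u) {x : ℝ} (hx : x ∈ Ici r) :
    ∑' n, u n x = 1 + nestedIntegral r E g (fun v => ∑' n, u n v) x := by
  rw [(h.summable hx).tsum_eq_zero_add, h.zero, (h.hasSum_succ hx).tsum_eq]

end IsNeumannSeq

theorem series_u_solves_ode_general (r : ℝ) (A B : ℝ → ℝ)
    (hA_cont : ContinuousOn A (Ici r)) (hA_pos : ∀ x ∈ Ici r, 0 < A x)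
    (hB_cont : ContinuousOn B (Ici r))
    (u : ℕ → ℝ → ℝ)
    (hu0 : ∀ x, u 0 x = 1)
    (hurec : ∀ n : ℕ, ∀ x : ℝ,
      u (n + 1) x = ∫ y in r..x, Real.exp (-∫ z in r..y, B z) *
        ∫ v in r..y, u n v * (2 * Real.exp (∫ z in r..v, B z) / A v)) :
    (∀ x ∈ Ici r, Summable (fun n => |u n x|)) ∧
    TendstoLocallyUniformlyOn (fun N x => ∑ n ∈ Finset.range N, u n x)
      (fun x => ∑' n, u n x) atTop (Ici r) ∧
    MonotoneOn (fun x => ∑' n, u n x) (Ici r) ∧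
    ∃ U' U'' : ℝ → ℝ,
      (∀ x ∈ Ici r, HasDerivWithinAt (fun y => ∑' n, u n y) (U' x) (Ici r) x) ∧
      (∀ x ∈ Ici r, HasDerivWithinAt U' (U'' x) (Ici r) x) ∧
      ContinuousOn U' (Ici r) ∧ ContinuousOn U'' (Ici r) ∧
      (∀ x ∈ Ici r, A x * U'' x + A x * B x * U' x = 2 * ∑' n, u n x) := by
  set P : ℝ → ℝ := fun y => ∫ z in r..y, B z
  set E : ℝ → ℝ := fun y => Real.exp (-P y)
  set g : ℝ → ℝ := fun v => 2 * Real.exp (P v) / A v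
  set U : ℝ → ℝ := fun x => ∑' n, u n x
  have hP := continuousOn_integral_Ici hB_cont
  have hE : ContinuousOn E (Ici r) := hP.neg.rexp
  have hg : ContinuousOn g (Ici r) :=
    (continuousOn_const.mul hP.rexp).div hA_cont fun x hx => (hA_pos x hx).ne'
  have h : IsNeumannSeq r E g u :=
    ⟨hE, hg, fun _ _ => (Real.exp_pos _).le,
      fun x hx => div_nonneg (by positivity) (hA_pos x hx).le, hu0, fun n => funext (hurec n)⟩
  have hUg : ContinuousOn (fun v => U v * g v) (Ici r) := h.continuousOn_tsum.mul hg
  refine ⟨fun _ => h.summable_abs, h.tendstoLocallyUniformlyOn, h.monotoneOn_tsum,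
    fun x => E x * ∫ v in r..x, U v * g v,
    fun x => E x * -B x * (∫ v in r..x, U v * g v) + E x * (U x * g x), ?_, ?_, ?_, ?_, ?_⟩
  · exact fun x hx =>
      ((hasDerivWithinAt_nestedIntegral hE hg h.continuousOn_tsum hx).const_add 1).congr
      (fun y hy => h.tsum_eq_one_add_nestedIntegral hy) (h.tsum_eq_one_add_nestedIntegral hx)
  · exact fun x hx => ((hasDerivWithinAt_integral_Ici hB_cont hx).neg.exp).mul
      (hasDerivWithinAt_integral_Ici hUg hx)
  · exact hE.mul (continuousOn_integral_Ici hUg)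
  · exact ((hE.mul hB_cont.neg).mul (continuousOn_integral_Ici hUg)).add (hE.mul hUg)
  · intro x hx
    have hEg : E x * g x * A x = 2 := by
      simp only [E, g, Real.exp_neg]
      field_simp [(hA_pos x hx).ne']
    linear_combination U x * hEg

/-- The series `u = Σₙ uₙ` converges absolutely locally uniformly on `[r,∞)`,
is twice continuously differentiable, nondecreasing, and satisfies
`A u'' + A B u' = 2 u` on `[r,∞)`. -/
theorem series_u_solves_ode (r : ℝ) (hr : 0 < r) (A B : ℝ → ℝ)
    (hA_cont : ContinuousOn A (Ici r)) (hA_pos : ∀ x ∈ Ici r, 0 < A x)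
    (hB_cont : ContinuousOn B (Ici r)) (hB_pos : ∀ x ∈ Ici r, 0 < B x)
    (u : ℕ → ℝ → ℝ)
    (hu0 : ∀ x, u 0 x = 1)
    (hurec : ∀ n : ℕ, ∀ x : ℝ,
      u (n + 1) x = ∫ y in r..x, Real.exp (-∫ z in r..y, B z) *
        ∫ v in r..y, u n v * (2 * Real.exp (∫ z in r..v, B z) / A v)) :
    (∀ x ∈ Ici r, Summable (fun n => |u n x|)) ∧
    TendstoLocallyUniformlyOn (fun N x => ∑ n ∈ Finset.range N, u n x)
      (fun x => ∑' n, u n x) atTop (Ici r) ∧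
    MonotoneOn (fun x => ∑' n, u n x) (Ici r) ∧
    ∃ U' U'' : ℝ → ℝ,
      (∀ x ∈ Ici r, HasDerivWithinAt (fun y => ∑' n, u n y) (U' x) (Ici r) x) ∧
      (∀ x ∈ Ici r, HasDerivWithinAt U' (U'' x) (Ici r) x) ∧
      ContinuousOn U' (Ici r) ∧ ContinuousOn U'' (Ici r) ∧
      (∀ x ∈ Ici r, A x * U'' x + A x * B x * U' x = 2 * ∑' n, u n x) :=
  series_u_solves_ode_general r A B hA_cont hA_pos hB_cont u hu0 hurec
end

section
/- Let d ≥ 3 and let α : (0,∞) → (0,∞) be continuous. Set A(x) = 2x α(√(2x)), B(x) = d/(2x), C(z) = exp(∫_{1/2}^z B(σ) dσ). If ∫_1^∞ ρ/α(ρ) dρ < ∞, then ∫_{1/2}^∞ (∫_{1/2}^z C(σ)/A(σ) dσ)/C(z) dz < ∞ and ∫_0^{1/2} (∫_z^{1/2} C(σ)/A(σ) dσ)/C(z) dz = ∞. -/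
open MeasureTheory Set intervalIntegral

open scoped ENNReal

/-! Since `C z = (2z)^(d/2)`, both integrands are `(∫ C/A) · (2z)^(-d/2)`.
On `(1/2, ∞)` Tonelli exchanges the two integrals; the tail `∫_σ^∞ z^(-d/2) dz` is a multiple of
`σ^(1-d/2)`, which cancels `C σ / A σ` down to a multiple of `1 / α(√(2σ))`, and the substitution
`ρ = √(2σ)` turns this into `∫_1^∞ ρ/α(ρ) dρ`. On `(0, 1/2)` the inner integral is at least
`∫_{1/4}^{1/2} C/A > 0`, while `∫_0 z^(-d/2) dz` diverges because `d/2 ≥ 1`. -/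

theorem Real.exp_integral_const_div {a z : ℝ} (c : ℝ) (ha : 0 < a) (hz : 0 < z) :
    Real.exp (∫ σ in a..z, c / σ) = (z / a) ^ c := by
  simp_rw [div_eq_mul_inv c]
  rw [intervalIntegral.integral_const_mul, integral_inv_of_pos ha hz,
    Real.rpow_def_of_pos (div_pos hz ha), mul_comm]

section

variable {β : Type*} [MeasurableSpace β] [LinearOrder β] [TopologicalSpace β]
  [OrderClosedTopology β] [SecondCountableTopology β] [OpensMeasurableSpace β]

theorem lintegral_setLIntegral_Iic_mul_eq {μ : Measure β} [SFinite μ] {f g : β → ℝ≥0∞}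
    (hf : AEMeasurable f μ) (hg : AEMeasurable g μ) :
    ∫⁻ z, (∫⁻ σ in Iic z, f σ ∂μ) * g z ∂μ = ∫⁻ σ, f σ * ∫⁻ z in Ici σ, g z ∂μ ∂μ := by
  set F : β × β → ℝ≥0∞ := {p | p.2 ≤ p.1}.indicator fun p => f p.2 * g p.1
  have hF : AEMeasurable F (μ.prod μ) :=
    (hf.comp_snd.mul hg.comp_fst).indicator (measurableSet_le measurable_snd measurable_fst)
  calc ∫⁻ z, (∫⁻ σ in Iic z, f σ ∂μ) * g z ∂μ = ∫⁻ z, ∫⁻ σ, F (z, σ) ∂μ ∂μ := by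
        refine lintegral_congr fun z => ?_
        rw [← lintegral_mul_const'' _ hf.restrict, ← lintegral_indicator measurableSet_Iic]
        refine lintegral_congr fun σ => ?_
        by_cases h : σ ≤ z <;> simp [F, h]
    _ = ∫⁻ σ, ∫⁻ z, F (z, σ) ∂μ ∂μ := lintegral_lintegral_swap hF
    _ = ∫⁻ σ, f σ * ∫⁻ z in Ici σ, g z ∂μ ∂μ := by
        refine lintegral_congr fun σ => ?_
        rw [← lintegral_const_mul'' _ hg.restrict, ← lintegral_indicator measurableSet_Ici]
        refine lintegral_congr fun z => ?_
        by_cases h : σ ≤ z <;> simp [F, h]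

end

theorem lintegral_Ioi_rpow_neg {r σ : ℝ} (hr : 1 < r) (hσ : 0 < σ) :
    ∫⁻ z in Ioi σ, ENNReal.ofReal (z ^ (-r)) = ENNReal.ofReal (σ ^ (1 - r) / (r - 1)) := by
  rw [← ofReal_integral_eq_lintegral_ofReal (integrableOn_Ioi_rpow_of_lt (by linarith) hσ),
    integral_Ioi_rpow_of_lt (by linarith) hσ]
  · congr 1
    rw [show -r + 1 = 1 - r by ring, neg_div, ← div_neg, neg_sub]
  · filter_upwards [ae_restrict_mem measurableSet_Ioi] with z hz
    exact Real.rpow_nonneg (hσ.trans hz).le _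

theorem lintegral_Ioc_rpow_neg_eq_top {r b : ℝ} (hr : 1 ≤ r) (hb : 0 < b) :
    ∫⁻ z in Ioc 0 b, ENNReal.ofReal (z ^ (-r)) = ∞ := by
  by_contra h
  have hint : IntegrableOn (fun z : ℝ => z ^ (-r)) (Ioc 0 b) :=
    (lintegral_ofReal_ne_top_iff_integrable (by fun_prop) (ae_restrict_of_forall_mem
      measurableSet_Ioc fun z hz => Real.rpow_nonneg hz.1.le _)).mp h
  have := (integrableOn_Ioo_rpow_iff hb).mp (hint.mono_set Ioo_subset_Ioc_self)
  linarith

theorem lintegral_Ioi_comp_sqrt_two_mul {a : ℝ} (ha : 0 ≤ a) (h : ℝ → ℝ≥0∞) :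
    ∫⁻ σ in Ioi (a ^ 2 / 2), h (Real.sqrt (2 * σ)) = ∫⁻ ρ in Ioi a, ENNReal.ofReal ρ * h ρ := by
  have hmono : StrictMonoOn (fun ρ : ℝ => ρ ^ 2 / 2) (Ici a) := fun x hx y _ hxy => by
    simp only [mem_Ici] at hx
    show x ^ 2 / 2 < y ^ 2 / 2
    gcongr
    linarith
  have himage : (fun ρ : ℝ => ρ ^ 2 / 2) '' Ioi a = Ioi (a ^ 2 / 2) := by
    refine Subset.antisymm (image_subset_iff.mpr fun ρ hρ =>
      hmono (mem_Ici.mpr le_rfl) (mem_Ici.mpr (le_of_lt hρ)) hρ) fun σ (hσ : a ^ 2 / 2 < σ) => ?_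
    have h2σ : 0 ≤ 2 * σ := by nlinarith [sq_nonneg a]
    refine ⟨Real.sqrt (2 * σ), ?_, by
      show Real.sqrt (2 * σ) ^ 2 / 2 = σ
      rw [Real.sq_sqrt h2σ]
      ring⟩
    rw [mem_Ioi, Real.lt_sqrt ha]
    linarith
  rw [← himage, lintegral_image_eq_lintegral_abs_deriv_mul measurableSet_Ioi
    (fun x _ => by simpa using ((hasDerivAt_pow 2 x).div_const 2).hasDerivWithinAt)
    (hmono.injOn.mono Ioi_subset_Ici_self)]
  refine setLIntegral_congr_fun measurableSet_Ioi fun ρ hρ => ?_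
  have hρ0 : 0 ≤ ρ := ha.trans (le_of_lt hρ)
  rw [abs_of_nonneg hρ0, mul_div_cancel₀ _ two_ne_zero, Real.sqrt_sq hρ0]

theorem lintegral_Ioi_intervalIntegral_mul_rpow_neg {f : ℝ → ℝ} {a r : ℝ} (ha : 0 < a)
    (hr : 1 < r) (hf : ContinuousOn f (Ici a)) (hf0 : ∀ σ ∈ Ioi a, 0 ≤ f σ) :
    ∫⁻ z in Ioi a, ENNReal.ofReal ((∫ σ in a..z, f σ) * z ^ (-r)) =
      ∫⁻ σ in Ioi a, ENNReal.ofReal (f σ * (σ ^ (1 - r) / (r - 1))) := by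
  have hf_meas : AEMeasurable (fun σ => ENNReal.ofReal (f σ)) (volume.restrict (Ioi a)) :=
    ((hf.mono Ioi_subset_Ici_self).aemeasurable measurableSet_Ioi).ennreal_ofReal
  have inner : ∀ z ∈ Ioi a, ENNReal.ofReal ((∫ σ in a..z, f σ) * z ^ (-r)) =
      (∫⁻ σ in Iic z, ENNReal.ofReal (f σ) ∂volume.restrict (Ioi a)) *
        ENNReal.ofReal (z ^ (-r)) := by
    intro z hz
    have hf0' : ∀ σ ∈ Ioc a z, 0 ≤ f σ := fun σ hσ => hf0 σ hσ.1
    rw [Measure.restrict_restrict measurableSet_Iic, Iic_inter_Ioi,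
      integral_of_le (le_of_lt hz),
      ENNReal.ofReal_mul (setIntegral_nonneg measurableSet_Ioc hf0'),
      ofReal_integral_eq_lintegral_ofReal
        ((hf.mono Icc_subset_Ici_self).integrableOn_Icc.mono_set Ioc_subset_Icc_self)
        (ae_restrict_of_forall_mem measurableSet_Ioc hf0')]
  have outer : ∀ σ ∈ Ioi a, ENNReal.ofReal (f σ) *
      ∫⁻ z in Ici σ, ENNReal.ofReal (z ^ (-r)) ∂volume.restrict (Ioi a) =
      ENNReal.ofReal (f σ * (σ ^ (1 - r) / (r - 1))) := by
    intro σ hσ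
    rw [Measure.restrict_restrict measurableSet_Ici,
      inter_eq_left.mpr (Ici_subset_Ioi.mpr hσ), setLIntegral_congr Ioi_ae_eq_Ici.symm,
      lintegral_Ioi_rpow_neg hr (ha.trans hσ), ENNReal.ofReal_mul (hf0 σ hσ)]
  rw [setLIntegral_congr_fun measurableSet_Ioi inner,
    lintegral_setLIntegral_Iic_mul_eq hf_meas (by fun_prop),
    setLIntegral_congr_fun measurableSet_Ioi outer]

theorem lintegral_Ioc_intervalIntegral_mul_rpow_neg_eq_top {f : ℝ → ℝ} {b r : ℝ} (hb : 0 < b)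
    (hr : 1 ≤ r) (hf : ContinuousOn f (Ioc 0 b)) (hf0 : ∀ σ ∈ Ioc 0 b, 0 < f σ) :
    ∫⁻ z in Ioc 0 b, ENNReal.ofReal ((∫ σ in z..b, f σ) * z ^ (-r)) = ∞ := by
  have hint : ∀ z ∈ Ioc 0 b, IntervalIntegrable f volume z b := fun z hz =>
    (hf.mono (by rw [uIcc_of_le hz.2]; exact Icc_subset_Ioc hz.1 le_rfl)).intervalIntegrable
  set c := ∫ σ in b / 2..b, f σ
  have hc : 0 < c := intervalIntegral_pos_of_pos_on (hint _ ⟨by linarith, by linarith⟩)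
    (fun σ hσ => hf0 σ ⟨by linarith [hσ.1], hσ.2.le⟩) (by linarith)
  have hbound : ∀ z ∈ Ioc 0 (b / 2),
      ENNReal.ofReal c * ENNReal.ofReal (z ^ (-r)) ≤
        ENNReal.ofReal ((∫ σ in z..b, f σ) * z ^ (-r)) := by
    intro z hz
    rw [← ENNReal.ofReal_mul hc.le]
    refine ENNReal.ofReal_le_ofReal (mul_le_mul_of_nonneg_right ?_ (Real.rpow_nonneg hz.1.le _))
    refine integral_mono_interval hz.2 (by linarith) le_rfl
      (ae_restrict_of_forall_mem measurableSet_Ioc fun σ hσ => (hf0 σ ⟨hz.1.trans hσ.1, hσ.2⟩).le)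
      (hint z ⟨hz.1, by linarith [hz.2]⟩)
  refine top_unique ?_
  calc ∞ = ENNReal.ofReal c * ∫⁻ z in Ioc 0 (b / 2), ENNReal.ofReal (z ^ (-r)) := by
        rw [lintegral_Ioc_rpow_neg_eq_top hr (by linarith), ENNReal.mul_top (by simpa using hc)]
    _ ≤ ∫⁻ z in Ioc 0 (b / 2), ENNReal.ofReal ((∫ σ in z..b, f σ) * z ^ (-r)) := by
        rw [← lintegral_const_mul' _ _ ENNReal.ofReal_ne_top]
        exact setLIntegral_mono' measurableSet_Ioc hbound
    _ ≤ _ := lintegral_mono_set (Ioc_subset_Ioc_right (by linarith))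

theorem lintegral_Ioi_inv_comp_sqrt_two_mul_lt_top {α : ℝ → ℝ}
    (hfin : ∫⁻ ρ in Ioi (1 : ℝ), ENNReal.ofReal (ρ / α ρ) < ⊤) :
    ∫⁻ σ in Ioi (1 / 2 : ℝ), ENNReal.ofReal (α (Real.sqrt (2 * σ)))⁻¹ < ⊤ := by
  have hsub := lintegral_Ioi_comp_sqrt_two_mul zero_le_one fun ρ => ENNReal.ofReal (α ρ)⁻¹
  rw [one_pow] at hsub
  rwa [hsub, setLIntegral_congr_fun measurableSet_Ioi fun ρ (hρ : 1 < ρ) => by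
    rw [← ENNReal.ofReal_mul (by linarith), ← div_eq_mul_inv]]

section

variable {α A C : ℝ → ℝ} {r : ℝ}

theorem div_pos_of_eq_rpow (hα_pos : ∀ x ∈ Ioi (0 : ℝ), 0 < α x)
    (hA : ∀ x, A x = 2 * x * α (Real.sqrt (2 * x))) (hC : ∀ z, 0 < z → C z = (2 * z) ^ r)
    {σ : ℝ} (hσ : 0 < σ) : 0 < C σ / A σ := by
  rw [hC σ hσ, hA]
  exact div_pos (Real.rpow_pos_of_pos (by linarith) _)
    (mul_pos (by linarith) (hα_pos _ (Real.sqrt_pos.mpr (by linarith))))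

theorem continuousOn_div_of_eq_rpow (hα_cont : ContinuousOn α (Ioi 0))
    (hα_pos : ∀ x ∈ Ioi (0 : ℝ), 0 < α x) (hA : ∀ x, A x = 2 * x * α (Real.sqrt (2 * x)))
    (hC : ∀ z, 0 < z → C z = (2 * z) ^ r) : ContinuousOn (fun σ => C σ / A σ) (Ioi 0) := by
  have hsqrt_pos : MapsTo (fun x : ℝ => Real.sqrt (2 * x)) (Ioi 0) (Ioi 0) :=
    fun x (hx : 0 < x) => Real.sqrt_pos.mpr (by linarith)
  have hC_cont : ContinuousOn C (Ioi 0) :=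
    ((continuousOn_const.mul continuousOn_id).rpow_const fun x (hx : 0 < x) =>
      Or.inl (mul_pos two_pos hx).ne').congr hC
  have hA_cont : ContinuousOn A (Ioi 0) :=
    ((continuousOn_const.mul continuousOn_id).mul
      (hα_cont.comp (by fun_prop) hsqrt_pos)).congr fun x _ => hA x
  refine hC_cont.div hA_cont fun x hx => ?_
  rw [hA]
  exact mul_ne_zero (mul_pos two_pos hx).ne' (hα_pos _ (hsqrt_pos hx)).ne'

theorem ofReal_div_eq_rpow_neg (hC : ∀ z, 0 < z → C z = (2 * z) ^ r) {z : ℝ} (hz : 0 < z)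
    (x : ℝ) :
    ENNReal.ofReal (x / C z) = ENNReal.ofReal (2 ^ (-r)) * ENNReal.ofReal (x * z ^ (-r)) := by
  rw [← ENNReal.ofReal_mul (by positivity), hC z hz, div_eq_mul_inv,
    ← Real.rpow_neg (by positivity), Real.mul_rpow zero_le_two hz.le, mul_left_comm]

theorem div_mul_rpow_eq_inv (hα_pos : ∀ x ∈ Ioi (0 : ℝ), 0 < α x)
    (hA : ∀ x, A x = 2 * x * α (Real.sqrt (2 * x))) (hC : ∀ z, 0 < z → C z = (2 * z) ^ r)
    {σ : ℝ} (hσ : 0 < σ) :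
    C σ / A σ * (σ ^ (1 - r) / (r - 1)) = 2 ^ r / (2 * (r - 1)) * (α (Real.sqrt (2 * σ)))⁻¹ := by
  have hσ_pow : σ ^ r * σ ^ (1 - r) = σ := by
    rw [← Real.rpow_add hσ, add_sub_cancel, Real.rpow_one]
  have hα_ne := (hα_pos _ (Real.sqrt_pos.mpr (by linarith : (0 : ℝ) < 2 * σ))).ne'
  rw [hC σ hσ, hA, Real.mul_rpow zero_le_two hσ.le]
  field_simp
  rw [hσ_pow]

theorem lintegral_Ioi_intervalIntegral_div_lt_top (hα_cont : ContinuousOn α (Ioi 0))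
    (hα_pos : ∀ x ∈ Ioi (0 : ℝ), 0 < α x) (hA : ∀ x, A x = 2 * x * α (Real.sqrt (2 * x)))
    (hC : ∀ z, 0 < z → C z = (2 * z) ^ r) (hr : 1 < r)
    (hfin : ∫⁻ ρ in Ioi (1 : ℝ), ENNReal.ofReal (ρ / α ρ) < ⊤) :
    ∫⁻ z in Ioi (1 / 2 : ℝ), ENNReal.ofReal ((∫ σ in (1 / 2 : ℝ)..z, C σ / A σ) / C z) < ⊤ := by
  have hpos : ∀ σ ∈ Ioi (1 / 2 : ℝ), 0 < σ := fun σ (hσ : 1 / 2 < σ) => by linarith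
  rw [setLIntegral_congr_fun measurableSet_Ioi fun z hz =>
      ofReal_div_eq_rpow_neg hC (hpos z hz) _,
    lintegral_const_mul' _ _ ENNReal.ofReal_ne_top,
    lintegral_Ioi_intervalIntegral_mul_rpow_neg (by norm_num) hr
      ((continuousOn_div_of_eq_rpow hα_cont hα_pos hA hC).mono
        (Ici_subset_Ioi.mpr (by norm_num)))
      fun σ hσ => (div_pos_of_eq_rpow hα_pos hA hC (hpos σ hσ)).le,
    setLIntegral_congr_fun measurableSet_Ioi fun σ hσ => by
      rw [div_mul_rpow_eq_inv hα_pos hA hC (hpos σ hσ), ENNReal.ofReal_mul (by positivity)],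
    lintegral_const_mul' _ _ ENNReal.ofReal_ne_top]
  exact ENNReal.mul_lt_top ENNReal.ofReal_lt_top
    (ENNReal.mul_lt_top ENNReal.ofReal_lt_top (lintegral_Ioi_inv_comp_sqrt_two_mul_lt_top hfin))

theorem lintegral_Ioc_intervalIntegral_div_eq_top (hα_cont : ContinuousOn α (Ioi 0))
    (hα_pos : ∀ x ∈ Ioi (0 : ℝ), 0 < α x) (hA : ∀ x, A x = 2 * x * α (Real.sqrt (2 * x)))
    (hC : ∀ z, 0 < z → C z = (2 * z) ^ r) (hr : 1 ≤ r) :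
    ∫⁻ z in Ioc (0 : ℝ) (1 / 2), ENNReal.ofReal ((∫ σ in z..(1 / 2 : ℝ), C σ / A σ) / C z) = ⊤ := by
  rw [setLIntegral_congr_fun measurableSet_Ioc fun z hz => ofReal_div_eq_rpow_neg hC hz.1 _,
    lintegral_const_mul' _ _ ENNReal.ofReal_ne_top,
    lintegral_Ioc_intervalIntegral_mul_rpow_neg_eq_top (by norm_num) hr
      ((continuousOn_div_of_eq_rpow hα_cont hα_pos hA hC).mono Ioc_subset_Ioi_self)
      fun σ hσ => div_pos_of_eq_rpow hα_pos hA hC hσ.1]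
  exact ENNReal.mul_top (ENNReal.ofReal_pos.mpr (by positivity)).ne'

end

/-- For `d ≥ 3`, if `∫_1^∞ ρ/α(ρ) dρ < ∞`, then the outer double integral on
`(1/2, ∞)` is finite and the one on `(0, 1/2)` is infinite. -/
theorem condition_NL1_from_example (d : ℕ) (hd : 3 ≤ d) (α : ℝ → ℝ)
    (hα_cont : ContinuousOn α (Ioi 0)) (hα_pos : ∀ x ∈ Ioi (0:ℝ), 0 < α x)
    (A B C : ℝ → ℝ)
    (hA : ∀ x, A x = 2 * x * α (Real.sqrt (2 * x)))
    (hB : ∀ x, B x = (d : ℝ) / (2 * x))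
    (hC : ∀ z, C z = Real.exp (∫ σ in (1/2 : ℝ)..z, B σ))
    (hfin : ∫⁻ ρ in Ioi (1 : ℝ), ENNReal.ofReal (ρ / α ρ) < ⊤) :
    (∫⁻ z in Ioi (1/2 : ℝ),
        ENNReal.ofReal ((∫ σ in (1/2 : ℝ)..z, C σ / A σ) / C z) < ⊤) ∧
    (∫⁻ z in Ioc (0:ℝ) (1/2 : ℝ),
        ENNReal.ofReal ((∫ σ in z..(1/2 : ℝ), C σ / A σ) / C z) = ⊤) := by
  have hC_rpow : ∀ z, 0 < z → C z = (2 * z) ^ ((d : ℝ) / 2) := fun z hz => by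
    rw [hC, integral_congr fun σ _ => by rw [hB, ← div_div],
      Real.exp_integral_const_div _ (by norm_num) hz, div_div_eq_mul_div, div_one, mul_comm]
  have hr : (1 : ℝ) < d / 2 := by
    have : (3 : ℝ) ≤ d := by exact_mod_cast hd
    linarith
  exact ⟨lintegral_Ioi_intervalIntegral_div_lt_top hα_cont hα_pos hA hC_rpow hr hfin,
    lintegral_Ioc_intervalIntegral_div_eq_top hα_cont hα_pos hA hC_rpow hr.le⟩
end
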